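/- arXiv:1106.5463 — 2 statements merged into one kernel-verified Lean document; each statement's English description precedes it below -/
import Mathlib

section
/- Let (D, ω) be a good weighted digraph and L a good weighted local median order of (D, ω) with feed vertex f. Then for every x ∈ J(f), ω(N^+(x) \ J(f)) ≤ ω(G_L \ J(f)). Consequently, if x has the weighted SNP in the induced subdigraph D[J(f)], then x has the weighted SNP in D. -/
/-!
Since `f` is the last vertex of the good order `L`, `J(f)` is a final segment of `L`, and since `D`
is good, `J(f)` is an interval of `D`. So every `x ∈ J(f)` has the same out-neighbours
`N⁺(f) \ J(f)` outside `J(f)`, and every good vertex outside `J(f)` is a second out-neighbour of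
`x`; the SNP statement follows from the inequality, and the inequality only concerns `f`.

Call a vertex before `J(f)` bad if it is neither an out-neighbour of `f` nor good, and cut the order
after each bad vertex and at the first vertex `L t` of `J(f)`. On each segment `[i, j]` the feedback
property bounds the out-neighbours of `L j` by its in-neighbours. Every out-neighbour `u` of `f` in
the segment is an out-neighbour of `L j`: for bad `L j`, the pair `u, L j` cannot be a missing edge,
since its `K(ξ)` would either contain `f`, putting `u` into `J(f)`, or be an interval avoiding `f`,
forcing `f → L j`. Every in-neighbour of `L j` in the segment is good: it is not bad, and an arc from `f` to it would
make `L j` good or, for `j = t`, form a digon with `f`. Summing over the segments gives the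
inequality.
-/

variable {V : Type*}

/-- Out-neighborhood of `v`. -/
def Nplus (A : V → V → Prop) (v : V) : Set V := {u | A v u}

/-- In-neighborhood of `v`. -/
def Nminus (A : V → V → Prop) (v : V) : Set V := {u | A u v}

/-- Second out-neighborhood: vertices at directed distance exactly 2 from `v`. -/
def Npp (A : V → V → Prop) (v : V) : Set V :=
  {u | u ≠ v ∧ ¬ A v u ∧ ∃ w, A v w ∧ A w u}

/-- The second neighborhood property. -/
def SNP (A : V → V → Prop) (v : V) : Prop := (Nplus A v).ncard ≤ (Npp A v).ncard

/-- A digraph (given by its arc relation) has no digons: no 2-cycles (this also rules out loops when stated for `u = v`). -/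
def NoDigons (A : V → V → Prop) : Prop := ∀ u v, ¬ (A u v ∧ A v u)

/-- A tournament: an orientation of a complete graph. -/
def IsTournament (A : V → V → Prop) : Prop :=
  (∀ v, ¬ A v v) ∧ ∀ u v : V, u ≠ v → (A u v ↔ ¬ A v u)

/-- `u v` is a missing edge: distinct and non-adjacent. -/
def MissingEdge (A : V → V → Prop) (u v : V) : Prop := u ≠ v ∧ ¬ A u v ∧ ¬ A v u

/-- `x₁y₁` loses to `x₂y₂` (with this labelling of endpoints). -/
def LosesAt (A : V → V → Prop) (x₁ y₁ x₂ y₂ : V) : Prop :=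
  A x₁ x₂ ∧ ¬ A x₁ y₂ ∧ y₂ ∉ Npp A x₁ ∧ A y₁ y₂ ∧ ¬ A y₁ x₂ ∧ x₂ ∉ Npp A y₁

/-- The losing relation between (unordered) missing edges: the arcs of the dependency digraph. -/
def EdgeLoses (A : V → V → Prop) (e e' : Sym2 V) : Prop :=
  ∃ x₁ y₁ x₂ y₂, e = s(x₁, y₁) ∧ e' = s(x₂, y₂) ∧
    MissingEdge A x₁ y₁ ∧ MissingEdge A x₂ y₂ ∧ LosesAt A x₁ y₁ x₂ y₂
/-- `e` is a missing edge of the digraph (as an unordered pair). -/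
def IsMissingE (A : V → V → Prop) (e : Sym2 V) : Prop :=
  ∃ u v, e = s(u, v) ∧ MissingEdge A u v

/-- One step of connectivity between missing edges: either an arc (in some
direction) of the dependency digraph `Δ`, or sharing a vertex (adjacency of the
corresponding components in the interval graph `I_D`). -/
def XiStep (A : V → V → Prop) (e e' : Sym2 V) : Prop :=
  IsMissingE A e ∧ IsMissingE A e' ∧
    (EdgeLoses A e e' ∨ EdgeLoses A e' e ∨ ∃ v, v ∈ e ∧ v ∈ e')

/-- `K(ξ)` for the connected component `ξ` of the interval graph containing the
missing edge `e`: all endpoints of missing edges reachable from `e` by `XiStep`s. -/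
def KXi (A : V → V → Prop) (e : Sym2 V) : Set V :=
  {v | ∃ e', Relation.ReflTransGen (XiStep A) e e' ∧ IsMissingE A e' ∧ v ∈ e'}

/-- `J(f)`: `{f}` if `f` is a whole vertex, and `K(ξ)` for the unique component
`ξ` of the interval graph with `f ∈ K(ξ)` otherwise. -/
def Jset (A : V → V → Prop) (f : V) : Set V :=
  {v | v = f ∨ ∃ e, IsMissingE A e ∧ f ∈ e ∧ v ∈ KXi A e}

/-- `K` is an interval of the digraph. -/
def IsInterval (A : V → V → Prop) (K : Set V) : Prop :=
  ∀ u ∈ K, ∀ v ∈ K, Nplus A u \ K = Nplus A v \ K ∧ Nminus A u \ K = Nminus A v \ K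

/-- A good digraph: every set `K(ξ)` is an interval of the digraph. -/
def GoodDigraph (A : V → V → Prop) : Prop :=
  ∀ e, IsMissingE A e → IsInterval A (KXi A e)

/-- An order of the vertices satisfying the (weighted) feedback property. -/
def FeedbackOrder {n : ℕ} (A : V → V → Prop) (ω : V → ℝ) (L : Fin n ≃ V) : Prop :=
  ∀ i j : Fin n, i ≤ j →
    (∑ᶠ k ∈ {k : Fin n | i ≤ k ∧ k ≤ j ∧ A (L k) (L i)}, ω (L k)) ≤
      (∑ᶠ k ∈ {k : Fin n | i ≤ k ∧ k ≤ j ∧ A (L i) (L k)}, ω (L k)) ∧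
    (∑ᶠ k ∈ {k : Fin n | i ≤ k ∧ k ≤ j ∧ A (L j) (L k)}, ω (L k)) ≤
      (∑ᶠ k ∈ {k : Fin n | i ≤ k ∧ k ≤ j ∧ A (L k) (L j)}, ω (L k))

/-- A good order: every `K(ξ)` is an interval (a set of consecutive vertices) of the order. -/
def GoodOrder {n : ℕ} (A : V → V → Prop) (L : Fin n ≃ V) : Prop :=
  ∀ e, IsMissingE A e → ∃ lo hi : Fin n, ∀ k : Fin n, L k ∈ KXi A e ↔ (lo ≤ k ∧ k ≤ hi)

/-- The set of good vertices of an order with feed vertex `L last`. -/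
def goodSet {n : ℕ} (A : V → V → Prop) (L : Fin n ≃ V) (last : Fin n) : Set V :=
  {v | v ≠ L last ∧ ¬ A (L last) v ∧
    ∃ i j : Fin n, i ≤ j ∧ L j = v ∧ A (L last) (L i) ∧ A (L i) v}

/-- Out-neighborhood of `x` in the subdigraph induced on `K`. -/
def NplusIn (A : V → V → Prop) (K : Set V) (x : V) : Set V := {u ∈ K | A x u}

/-- Second out-neighborhood of `x` in the subdigraph induced on `K`. -/
def NppIn (A : V → V → Prop) (K : Set V) (x : V) : Set V :=
  {u ∈ K | u ≠ x ∧ ¬ A x u ∧ ∃ w ∈ K, A x w ∧ A w u}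


theorem finsum_mem_le_finsum_mem_of_subset {α M : Type*} [AddCommMonoid M] [PartialOrder M]
    [IsOrderedAddMonoid M] {w : α → M} {s t : Set α} (hst : s ⊆ t) (ht : t.Finite)
    (hw : ∀ a ∈ t \ s, 0 ≤ w a) : ∑ᶠ a ∈ s, w a ≤ ∑ᶠ a ∈ t, w a := by
  rw [← finsum_mem_add_sdiff hst ht]
  exact le_add_of_nonneg_right (finsum_mem_induction _ le_rfl (fun _ _ => add_nonneg) hw)

theorem Equiv.finsum_mem_preimage {α β M : Type*} [AddCommMonoid M] (e : α ≃ β) (w : β → M)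
    (s : Set β) : ∑ᶠ a ∈ e ⁻¹' s, w (e a) = ∑ᶠ b ∈ s, w b := by
  rw [← finsum_mem_image e.injective.injOn, e.image_preimage]

theorem finsum_mem_Icc_inter_le_of_segments {α M : Type*} [LinearOrder α] [LocallyFiniteOrder α]
    [AddCommMonoid M] [PartialOrder M] [IsOrderedAddMonoid M] {S P Q : Set α} {w : α → M}
    (hseg : ∀ i j, i ≤ j → j ∈ S → (∀ k ∈ Set.Ico i j, k ∉ S) →
      ∑ᶠ k ∈ Set.Icc i j ∩ P, w k ≤ ∑ᶠ k ∈ Set.Icc i j ∩ Q, w k)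
    {i t : α} (hit : i ≤ t) (ht : t ∈ S) :
    ∑ᶠ k ∈ Set.Icc i t ∩ P, w k ≤ ∑ᶠ k ∈ Set.Icc i t ∩ Q, w k := by
  induction hcard : (Set.Icc i t).ncard using Nat.strong_induction_on generalizing i with
  | _ m ih =>
  obtain ⟨j, ⟨⟨hij, hjt⟩, hjS⟩, hjmin⟩ :=
    ((Set.finite_Icc i t).inter_of_left S).exists_minimal ⟨t, ⟨hit, le_rfl⟩, ht⟩
  have hgap : ∀ k ∈ Set.Ico i j, k ∉ S := fun k ⟨hik, hkj⟩ hkS =>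
    hkj.not_ge (hjmin ⟨⟨hik, hkj.le.trans hjt⟩, hkS⟩ hkj.le)
  obtain rfl | hjt := hjt.eq_or_lt
  · exact hseg i j hij hjS hgap
  obtain ⟨i', ⟨hji', hi't⟩, hi'min⟩ := (Set.finite_Ioc j t).exists_minimal ⟨t, hjt, le_rfl⟩
  have hIoc : Set.Ioc j t = Set.Icc i' t :=
    Set.ext fun k => ⟨fun hk => ⟨le_of_not_gt fun hki' => hki'.not_ge (hi'min hk hki'.le), hk.2⟩,
      fun hk => ⟨hji'.trans_le hk.1, hk.2⟩⟩
  have hsmaller : (Set.Icc i' t).ncard < m := hcard ▸ Set.ncard_lt_ncard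
    (Set.ssubset_iff_of_subset (Set.Icc_subset_Icc_left (hij.trans hji'.le)) |>.2
      ⟨i, ⟨le_rfl, hit⟩, fun hi => (hij.trans_lt hji').not_ge hi.1⟩) (Set.finite_Icc i t)
  have hdisj : ∀ R : Set α, Disjoint (Set.Icc i j ∩ R) (Set.Icc i' t ∩ R) := fun R =>
    Set.disjoint_left.2 fun k hk hk' => (hk.1.2.trans_lt (hji'.trans_le hk'.1.1)).false
  have hsplit : ∀ R : Set α, ∑ᶠ k ∈ Set.Icc i t ∩ R, w k =
      ∑ᶠ k ∈ Set.Icc i j ∩ R, w k + ∑ᶠ k ∈ Set.Icc i' t ∩ R, w k := fun R => by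
    rw [← finsum_mem_union (hdisj R) ((Set.finite_Icc _ _).inter_of_left _)
      ((Set.finite_Icc _ _).inter_of_left _), ← Set.union_inter_distrib_right, ← hIoc,
      Set.Icc_union_Ioc_eq_Icc hij hjt.le]
  rw [hsplit, hsplit]
  exact add_le_add (hseg i j hij hjS hgap) (ih _ hsmaller hi't rfl)

section Digraph

variable {A : V → V → Prop}

instance : Std.Symm (XiStep A) where
  symm _ _ := fun ⟨he, he', h⟩ => ⟨he', he, by
    rcases h with h | h | ⟨v, hv, hv'⟩
    exacts [Or.inr (Or.inl h), Or.inl h, Or.inr (Or.inr ⟨v, hv', hv⟩)]⟩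

theorem mem_KXi_self {e : Sym2 V} (he : IsMissingE A e) {v : V} (hv : v ∈ e) : v ∈ KXi A e :=
  ⟨e, .refl, he, hv⟩

theorem mem_Jset_of_mem_KXi {e : Sym2 V} {f v : V} (hf : f ∈ KXi A e) (hv : v ∈ KXi A e) :
    v ∈ Jset A f := by
  obtain ⟨e₁, he₁, hm₁, hf₁⟩ := hf
  obtain ⟨e₂, he₂, hm₂, hv₂⟩ := hv
  exact Or.inr ⟨e₁, hm₁, hf₁, e₂, (Std.Symm.symm _ _ he₁).trans he₂, hm₂, hv₂⟩

theorem Jset_eq_KXi {f u : V} (hfu : MissingEdge A f u) : Jset A f = KXi A s(f, u) := by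
  have he : IsMissingE A s(f, u) := ⟨f, u, rfl, hfu⟩
  ext v
  refine ⟨?_, fun hv => Or.inr ⟨_, he, Sym2.mem_mk_left f u, hv⟩⟩
  rintro (rfl | ⟨e, he', hfe, hv⟩)
  · exact mem_KXi_self he (Sym2.mem_mk_left v u)
  · obtain ⟨e₂, he₂, hm₂, hv₂⟩ := hv
    exact ⟨e₂, .head ⟨he, he', Or.inr (Or.inr ⟨f, Sym2.mem_mk_left f u, hfe⟩)⟩ he₂, hm₂, hv₂⟩

theorem Jset_eq_singleton {f : V} (hf : ∀ u, ¬ MissingEdge A f u) : Jset A f = {f} := by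
  ext v
  refine ⟨?_, fun hv => Or.inl hv⟩
  rintro (rfl | ⟨e, ⟨a, b, rfl, hab⟩, hfe, -⟩)
  · rfl
  · rcases Sym2.mem_iff.1 hfe with rfl | rfl
    exacts [(hf b hab).elim, (hf a ⟨hab.1.symm, hab.2.2, hab.2.1⟩).elim]

theorem isInterval_singleton (v : V) : IsInterval A {v} := by
  rintro a rfl b rfl
  exact ⟨rfl, rfl⟩

theorem GoodDigraph.isInterval_Jset (hD : GoodDigraph A) (f : V) : IsInterval A (Jset A f) := by
  by_cases hf : ∃ u, MissingEdge A f u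
  · obtain ⟨u, hfu⟩ := hf
    rw [Jset_eq_KXi hfu]
    exact hD _ ⟨f, u, rfl, hfu⟩
  · rw [Jset_eq_singleton (not_exists.1 hf)]
    exact isInterval_singleton f

theorem IsInterval.adj_out_iff {K : Set V} (hK : IsInterval A K) {x y v : V} (hx : x ∈ K)
    (hy : y ∈ K) (hv : v ∉ K) : A x v ↔ A y v := by
  have h := congrArg (v ∈ ·) (hK x hx y hy).1
  simpa [Nplus, hv] using h

theorem IsInterval.adj_in_iff {K : Set V} (hK : IsInterval A K) {x y v : V} (hx : x ∈ K)
    (hy : y ∈ K) (hv : v ∉ K) : A v x ↔ A v y := by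
  have h := congrArg (v ∈ ·) (hK x hx y hy).2
  simpa [Nminus, hv] using h

theorem GoodDigraph.not_missingEdge (hD : GoodDigraph A) {f u w : V} (hu : u ∉ Jset A f)
    (hfu : A f u) (hfw : ¬ A f w) : ¬ MissingEdge A u w := by
  intro huw
  have he : IsMissingE A s(u, w) := ⟨u, w, rfl, huw⟩
  have hwK := mem_KXi_self he (Sym2.mem_mk_right u w)
  have huK := mem_KXi_self he (Sym2.mem_mk_left u w)
  by_cases hfK : f ∈ KXi A s(u, w)
  · exact hu (mem_Jset_of_mem_KXi hfK huK)
  · exact hfw (((hD _ he).adj_in_iff huK hwK hfK).1 hfu)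

end Digraph

section Order

variable {A : V → V → Prop} {n : ℕ} {L : Fin n ≃ V} {last : Fin n}

theorem GoodOrder.exists_Jset_eq_Ici (hLgood : GoodOrder A L) (hlast : (last : ℕ) = n - 1) :
    ∃ t, ∀ k, L k ∈ Jset A (L last) ↔ t ≤ k := by
  have hmax : ∀ k : Fin n, k ≤ last := fun k => Fin.le_def.2 (by omega)
  by_cases hf : ∃ u, MissingEdge A (L last) u
  · obtain ⟨u, hfu⟩ := hf
    have he : IsMissingE A s(L last, u) := ⟨_, u, rfl, hfu⟩
    obtain ⟨lo, hi, hK⟩ := hLgood _ he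
    have hhi : last ≤ hi := ((hK last).1 (mem_KXi_self he (Sym2.mem_mk_left _ u))).2
    rw [Jset_eq_KXi hfu]
    exact ⟨lo, fun k => (hK k).trans ⟨And.left, fun h => ⟨h, (hmax k).trans hhi⟩⟩⟩
  · rw [Jset_eq_singleton (not_exists.1 hf)]
    exact ⟨last, fun k => by
      rw [Set.mem_singleton_iff, L.injective.eq_iff]
      exact ⟨fun h => h.ge, fun h => le_antisymm (hmax k) h⟩⟩

variable {ω : V → ℝ} {t : Fin n}

theorem FeedbackOrder.finsum_Icc_inter_Nplus_diff_Jset_le (hL : FeedbackOrder A ω L) (hA : NoDigons A)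
    (hω : ∀ v, 0 ≤ ω v) (hD : GoodDigraph A) (hT : ∀ k, L k ∈ Jset A (L last) ↔ t ≤ k)
    {i j : Fin n} (hij : i ≤ j)
    (hj : j = t ∨ (j < t ∧ ¬ A (L last) (L j) ∧ L j ∉ goodSet A L last))
    (hgap : ∀ k ∈ Set.Ico i j, A (L last) (L k) ∨ L k ∈ goodSet A L last) :
    ∑ᶠ k ∈ Set.Icc i j ∩ L ⁻¹' (Nplus A (L last) \ Jset A (L last)), ω (L k) ≤
      ∑ᶠ k ∈ Set.Icc i j ∩ L ⁻¹' (goodSet A L last \ Jset A (L last)), ω (L k) := by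
  have hJ := hD.isInterval_Jset (L last)
  have hlastJ : L last ∈ Jset A (L last) := Or.inl rfl
  have hout : ∀ k, k < t → L k ∉ Jset A (L last) := fun k hk h => hk.not_ge ((hT k).1 h)
  have hjt : j ≤ t := hj.elim le_of_eq (·.1.le)
  calc _ ≤ ∑ᶠ k ∈ {k | i ≤ k ∧ k ≤ j ∧ A (L j) (L k)}, ω (L k) := by
        refine finsum_mem_le_finsum_mem_of_subset ?_ (Set.toFinite _) fun k _ => hω _
        rintro k ⟨⟨hik, hkj⟩, hfk, hkJ⟩
        refine ⟨hik, hkj, ?_⟩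
        rcases hj with rfl | ⟨hjt, hfj, hjG⟩
        · exact (hJ.adj_out_iff ((hT _).2 le_rfl) hlastJ hkJ).2 hfk
        · have hjl : L j ≠ L last := fun h => hout j hjt (h ▸ hlastJ)
          by_contra hjk
          exact hD.not_missingEdge hkJ hfk hfj
            ⟨fun h => hfj (h ▸ hfk), fun hkj' => hjG ⟨hjl, hfj, k, j, hkj, rfl, hfk, hkj'⟩, hjk⟩
    _ ≤ ∑ᶠ k ∈ {k | i ≤ k ∧ k ≤ j ∧ A (L k) (L j)}, ω (L k) := (hL i j hij).2
    _ ≤ _ := by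
        refine finsum_mem_le_finsum_mem_of_subset ?_ (Set.toFinite _) fun k _ => hω _
        rintro k ⟨hik, hkj, hkj'⟩
        have hkj : k < j := hkj.lt_of_ne (by rintro rfl; exact hA _ _ ⟨hkj', hkj'⟩)
        have hkJ := hout k (hkj.trans_le hjt)
        refine ⟨⟨hik, hkj.le⟩, (hgap k ⟨hik, hkj⟩).resolve_left fun hfk => ?_, hkJ⟩
        rcases hj with rfl | ⟨hjt, hfj, hjG⟩
        · exact hA _ _ ⟨hfk, (hJ.adj_in_iff ((hT _).2 le_rfl) hlastJ hkJ).1 hkj'⟩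
        · exact hjG ⟨fun h => hout j hjt (h ▸ hlastJ), hfj, k, j, hkj.le, rfl, hfk, hkj'⟩

theorem FeedbackOrder.finsum_Nplus_diff_Jset_le (hL : FeedbackOrder A ω L) (hA : NoDigons A)
    (hω : ∀ v, 0 ≤ ω v) (hD : GoodDigraph A) (hT : ∀ k, L k ∈ Jset A (L last) ↔ t ≤ k) :
    ∑ᶠ v ∈ Nplus A (L last) \ Jset A (L last), ω v ≤
      ∑ᶠ v ∈ goodSet A L last \ Jset A (L last), ω v := by
  have h0 : ∀ k : Fin n, (⟨0, t.pos⟩ : Fin n) ≤ k := fun k => Fin.le_def.2 k.val.zero_le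
  have hIcc : ∀ X : Set V, Set.Icc ⟨0, t.pos⟩ t ∩ L ⁻¹' (X \ Jset A (L last)) =
      L ⁻¹' (X \ Jset A (L last)) := fun X =>
    Set.inter_eq_right.2 fun k hk => ⟨h0 k, (not_le.1 fun h => hk.2 ((hT k).2 h)).le⟩
  rw [← L.finsum_mem_preimage, ← L.finsum_mem_preimage, ← hIcc (Nplus A (L last)),
    ← hIcc (goodSet A L last)]
  refine finsum_mem_Icc_inter_le_of_segments (S := {j | j = t ∨
      (j < t ∧ ¬ A (L last) (L j) ∧ L j ∉ goodSet A L last)}) ?_ (h0 t) (Or.inl rfl)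
  intro i j hij hj hgap
  have hjt : j ≤ t := hj.elim le_of_eq (·.1.le)
  refine hL.finsum_Icc_inter_Nplus_diff_Jset_le hA hω hD hT hij hj fun k hk => ?_
  by_contra! h
  exact hgap k hk (Or.inr ⟨hk.2.trans_le hjt, h⟩)

theorem goodSet_diff_Jset_subset_Npp (hD : GoodDigraph A) (hT : ∀ k, L k ∈ Jset A (L last) ↔ t ≤ k)
    {x : V} (hx : x ∈ Jset A (L last)) : goodSet A L last \ Jset A (L last) ⊆ Npp A x := by
  rintro v ⟨⟨-, hfv, i, j, hij, rfl, hfi, hiv⟩, hvJ⟩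
  have hJ := hD.isInterval_Jset (L last)
  have hlastJ : L last ∈ Jset A (L last) := Or.inl rfl
  have hiJ : L i ∉ Jset A (L last) := fun h => hvJ ((hT j).2 (((hT i).1 h).trans hij))
  exact ⟨fun h => hvJ (h ▸ hx), fun h => hfv ((hJ.adj_out_iff hx hlastJ hvJ).1 h),
    L i, (hJ.adj_out_iff hx hlastJ hiJ).2 hfi, hiv⟩

end Order

theorem NplusIn_eq_inter (A : V → V → Prop) (K : Set V) (x : V) :
    NplusIn A K x = Nplus A x ∩ K :=
  Set.ext fun _ => and_comm

theorem NppIn_subset_Npp (A : V → V → Prop) (K : Set V) (x : V) : NppIn A K x ⊆ Npp A x :=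
  fun _ ⟨_, hvx, hxv, w, _, hxw, hwv⟩ => ⟨hvx, hxv, w, hxw, hwv⟩

theorem finsum_Nplus_le_finsum_Npp_of_induced [Finite V] {A : V → V → Prop} {ω : V → ℝ}
    (hω : ∀ v, 0 ≤ ω v) {K G : Set V} {x : V} (hGK : Disjoint G K) (hG : G ⊆ Npp A x)
    (hout : ∑ᶠ v ∈ Nplus A x \ K, ω v ≤ ∑ᶠ v ∈ G, ω v)
    (hin : ∑ᶠ v ∈ NplusIn A K x, ω v ≤ ∑ᶠ v ∈ NppIn A K x, ω v) :
    ∑ᶠ v ∈ Nplus A x, ω v ≤ ∑ᶠ v ∈ Npp A x, ω v :=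
  calc ∑ᶠ v ∈ Nplus A x, ω v
      = ∑ᶠ v ∈ NplusIn A K x, ω v + ∑ᶠ v ∈ Nplus A x \ K, ω v := by
        rw [NplusIn_eq_inter, finsum_mem_inter_add_sdiff _ (Set.toFinite _)]
    _ ≤ ∑ᶠ v ∈ NppIn A K x, ω v + ∑ᶠ v ∈ G, ω v := add_le_add hin hout
    _ = ∑ᶠ v ∈ NppIn A K x ∪ G, ω v :=
        (finsum_mem_union (Set.disjoint_left.2 fun _ hv hv' => Set.disjoint_left.1 hGK hv' hv.1)
          (Set.toFinite _) (Set.toFinite _)).symm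
    _ ≤ ∑ᶠ v ∈ Npp A x, ω v :=
        finsum_mem_le_finsum_mem_of_subset (Set.union_subset (NppIn_subset_Npp A K x) hG)
          (Set.toFinite _) fun v _ => hω v

theorem good_order_feed_interval_SNP_general
    (A : V → V → Prop) (hA : NoDigons A)
    (ω : V → ℝ) (hω : ∀ v, 0 ≤ ω v)
    (hD : GoodDigraph A)
    {n : ℕ} (L : Fin n ≃ V)
    (hL : FeedbackOrder A ω L) (hLgood : GoodOrder A L)
    (last : Fin n) (hlast : (last : ℕ) = n - 1)
    (f : V) (hf : f = L last) :
    ∀ x ∈ Jset A f,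
      (∑ᶠ v ∈ (Nplus A x \ Jset A f), ω v) ≤
        (∑ᶠ v ∈ (goodSet A L last \ Jset A f), ω v) ∧
      ((∑ᶠ v ∈ NplusIn A (Jset A f) x, ω v) ≤ (∑ᶠ v ∈ NppIn A (Jset A f) x, ω v) →
        (∑ᶠ v ∈ Nplus A x, ω v) ≤ (∑ᶠ v ∈ Npp A x, ω v)) := by
  intro x hx
  subst hf
  have : Finite V := .of_equiv _ L
  obtain ⟨t, hT⟩ := hLgood.exists_Jset_eq_Ici hlast
  have hout : Nplus A x \ Jset A (L last) = Nplus A (L last) \ Jset A (L last) :=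
    (hD.isInterval_Jset (L last) x hx _ (Or.inl rfl)).1
  have hbound := hout ▸ hL.finsum_Nplus_diff_Jset_le hA hω hD hT
  exact ⟨hbound, finsum_Nplus_le_finsum_Npp_of_induced hω Set.disjoint_sdiff_left
    (goodSet_diff_Jset_subset_Npp hD hT hx) hbound⟩

/-- for a good weighted local median order `L` of a good weighted
digraph with feed vertex `f`, every `x ∈ J(f)` satisfies
`ω(N⁺(x) \ J(f)) ≤ ω(G_L \ J(f))`; consequently if `x` has the weighted SNP in
`D[J(f)]` then it has the weighted SNP in `D`. -/
theorem good_order_feed_interval_SNP [Fintype V]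
    (A : V → V → Prop) (hA : NoDigons A)
    (ω : V → ℝ) (hω : ∀ v, 0 ≤ ω v)
    (hD : GoodDigraph A)
    {n : ℕ} (hn : 0 < n) (L : Fin n ≃ V)
    (hL : FeedbackOrder A ω L) (hLgood : GoodOrder A L)
    (last : Fin n) (hlast : (last : ℕ) = n - 1)
    (f : V) (hf : f = L last) :
    ∀ x ∈ Jset A f,
      (∑ᶠ v ∈ (Nplus A x \ Jset A f), ω v) ≤
        (∑ᶠ v ∈ (goodSet A L last \ Jset A f), ω v) ∧
      ((∑ᶠ v ∈ NplusIn A (Jset A f) x, ω v) ≤ (∑ᶠ v ∈ NppIn A (Jset A f) x, ω v) →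
        (∑ᶠ v ∈ Nplus A x, ω v) ≤ (∑ᶠ v ∈ Npp A x, ω v)) :=
  good_order_feed_interval_SNP_general A hA ω hω hD L hL hLgood last hlast f hf
end

section
/- Let D be a digraph obtained from a tournament by deleting the edges of pairwise disjoint stars. Suppose that in the tournament induced on the centers of the missing stars, every vertex is a king, and that every missing edge has positive in-degree in the dependency digraph Δ of D. Then D has a vertex with the second neighborhood property. -/
variable {V : Type*}

/-! Complete `A` to a tournament `T` by orienting every missing edge away from its center, and let
`f` be the last vertex of a median order of `T`. In a median order every vertex is dominated by at
least half of any interval ending just before it. As in Havet and Thomassé's proof for tournaments,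
cutting the order after each vertex outside `N⁺(f) ∪ N⁺⁺(f)` and applying this to each piece gives
`|N⁺(f)| ≤ |N⁺⁺(f)|`, provided every such vertex dominates `N⁺(f)` in `T`.

That can only fail along a missing edge `c l` with center `c ∈ N⁺(f)` and `l` out of reach of `f`.
Since the centers are kings, a missing edge losing to `c l` has its center paired with `c`, so its
leaf `l₁` beats `l` and cannot reach `c`; then `f l₁` is a missing edge too, and repeating the step
yields a leaf `l₀ ∈ N⁺(f)` with `N⁺_T(l₀) ⊆ N⁺_T(f)`, which the last vertex of a median order never
has. -/

open scoped Classical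

@[simp]
theorem mem_Nplus {A : V → V → Prop} {v u : V} : u ∈ Nplus A v ↔ A v u := Iff.rfl

section MedianOrder

variable {T : V → V → Prop}

theorem IsTournament.asymm (hT : IsTournament T) {u v : V} (huv : T u v) : ¬ T v u := by
  rcases eq_or_ne u v with rfl | hne
  · exact absurd huv (hT.1 u)
  · exact (hT.2 u v hne).1 huv

theorem IsTournament.of_not (hT : IsTournament T) {u v : V} (hne : u ≠ v) (hvu : ¬ T v u) :
    T u v :=
  (hT.2 u v hne).2 hvu

noncomputable def forwardArcs (T : V → V → Prop) : List V → ℕ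
  | [] => 0
  | x :: xs => xs.countP (T x ·) + forwardArcs T xs

def IsMedianOrder (T : V → V → Prop) (m : List V) : Prop :=
  ∀ m', m'.Perm m → forwardArcs T m' ≤ forwardArcs T m

theorem exists_isMedianOrder (T : V → V → Prop) (l : List V) :
    ∃ m, m.Perm l ∧ IsMedianOrder T m := by
  obtain ⟨m, hm, hmax⟩ := l.permutations.toFinset.exists_max_image (forwardArcs T)
    ⟨l, by simp⟩
  have hml : m.Perm l := by simpa using hm
  exact ⟨m, hml, fun m' h => hmax m' (by simpa using h.trans hml)⟩

theorem IsMedianOrder.of_cons {a : V} {l : List V} (hm : IsMedianOrder T (a :: l)) :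
    IsMedianOrder T l := by
  intro l' hl'
  have h := hm (a :: l') (hl'.cons a)
  simp only [forwardArcs, hl'.countP_eq] at h
  omega

theorem IsMedianOrder.of_append {p s : List V} (hm : IsMedianOrder T (p ++ s)) :
    IsMedianOrder T s := by
  induction p with
  | nil => exact hm
  | cons a p ih => exact ih hm.of_cons

theorem forwardArcs_append_cons_add (T : V → V → Prop) (xs rest : List V) (z : V) :
    forwardArcs T (xs ++ z :: rest) + xs.countP (T z ·) =
      forwardArcs T (z :: (xs ++ rest)) + xs.countP (T · z) := by
  induction xs with
  | nil => simp
  | cons a xs ih =>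
    simp only [forwardArcs, List.cons_append, List.countP_cons, List.countP_append] at ih ⊢
    split_ifs <;> omega

theorem IsMedianOrder.countP_le_of_append_cons {xs rest : List V} {z : V}
    (hm : IsMedianOrder T (xs ++ z :: rest)) : xs.countP (T z ·) ≤ xs.countP (T · z) := by
  have h := hm _ List.perm_middle.symm
  have := forwardArcs_append_cons_add T xs rest z
  omega

theorem IsMedianOrder.countP_le_of_cons {ys : List V} {z : V}
    (hm : IsMedianOrder T (z :: ys)) : ys.countP (T · z) ≤ ys.countP (T z ·) := by
  have h := hm (ys ++ [z]) (by simp)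
  have := forwardArcs_append_cons_add T ys [] z
  simp only [List.append_nil] at this
  omega

theorem IsMedianOrder.not_Nplus_subset_of_last (hT : IsTournament T) {x f : V} {bs : List V}
    (hm : IsMedianOrder T (x :: (bs ++ [f]))) (hfx : T f x) : ¬ Nplus T x ⊆ Nplus T f := by
  intro hsub
  have hxf : ¬ T x f := hT.asymm hfx
  have hafter := hm.countP_le_of_cons
  have hbefore := IsMedianOrder.countP_le_of_append_cons (xs := x :: bs) (rest := []) hm
  have hout : bs.countP (T x ·) ≤ bs.countP (T f ·) :=
    List.countP_mono_left fun u _ hu => by simpa using hsub (by simpa using hu)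
  have hin : bs.countP (T · f) ≤ bs.countP (T · x) := by
    refine List.countP_mono_left fun u _ hu => ?_
    simp only [decide_eq_true_eq] at hu ⊢
    rcases eq_or_ne u x with rfl | hne
    · exact absurd hu hxf
    · exact hT.of_not hne fun hxu => hT.asymm hu (hsub hxu)
  simp only [List.countP_append, List.countP_cons, List.countP_nil, decide_eq_true_eq,
    hfx, hxf, if_true, if_false] at hafter hbefore
  omega

end MedianOrder

theorem List.Nodup.ncard_eq_countP {l : List V} (hnd : l.Nodup) (hall : ∀ v, v ∈ l)
    (S : Set V) : S.ncard = l.countP (· ∈ S) := by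
  have hS : S = ↑(l.filter (· ∈ S)).toFinset := by ext v; simp [hall v]
  rw [List.countP_eq_length_filter, ← List.toFinset_card_of_nodup (hnd.filter _),
    ← Set.ncard_coe_finset, ← hS]

section SecondNeighbourhood

variable {A T : V → V → Prop} {f : V}

theorem countP_Nplus_le_countP_Npp_of_append_cons (hT : IsTournament T) {xs rest : List V}
    {z : V} (hm : IsMedianOrder T (xs ++ z :: rest))
    (hgood : ∀ u ∈ xs, u ∈ Nplus A f ∨ u ∈ Npp A f) (hz : Nplus A f ⊆ Nplus T z) :
    xs.countP (· ∈ Nplus A f) ≤ xs.countP (· ∈ Npp A f) :=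
  calc xs.countP (· ∈ Nplus A f)
      ≤ xs.countP (T z ·) :=
        List.countP_mono_left fun u _ hu => by simpa using hz (by simpa using hu)
    _ ≤ xs.countP (T · z) := hm.countP_le_of_append_cons
    _ ≤ xs.countP (· ∈ Npp A f) := List.countP_mono_left fun u hu huz => by
        simp only [decide_eq_true_eq] at huz ⊢
        exact (hgood u hu).resolve_left fun hfu => hT.asymm huz (hz hfu)

theorem countP_Nplus_le_countP_Npp (hT : IsTournament T) (hAT : ∀ u v, A u v → T u v)
    (hdom : ∀ z ∉ Nplus A f, z ∉ Npp A f → Nplus A f ⊆ Nplus T z) (s : List V)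
    (hm : IsMedianOrder T (s ++ [f])) :
    s.countP (· ∈ Nplus A f) ≤ s.countP (· ∈ Npp A f) := by
  by_cases hbad : ∃ z ∈ s, z ∉ Nplus A f ∧ z ∉ Npp A f
  · obtain ⟨z, hfind⟩ := Option.isSome_iff_exists.1
      (List.find?_isSome (p := fun z => decide (z ∉ Nplus A f ∧ z ∉ Npp A f)).2
        (by simpa using hbad))
    obtain ⟨hz, xs, ys, rfl, hxs⟩ := List.find?_eq_some_iff_append.1 hfind
    simp only [decide_eq_true_eq, Bool.not_eq_true', decide_eq_false_iff_not] at hz hxs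
    have hxs_good : ∀ u ∈ xs, u ∈ Nplus A f ∨ u ∈ Npp A f := fun u hu => by
      by_contra! h
      exact hxs u hu h
    have hm' : IsMedianOrder T (xs ++ z :: (ys ++ [f])) := by simpa using hm
    have hxs_le := countP_Nplus_le_countP_Npp_of_append_cons hT hm' hxs_good (hdom z hz.1 hz.2)
    have hys_le := countP_Nplus_le_countP_Npp hT hAT hdom ys (hm'.of_append.of_cons)
    simp only [List.countP_append, List.countP_cons, decide_eq_true_eq, hz.1, if_false]
    omega
  · push Not at hbad
    refine countP_Nplus_le_countP_Npp_of_append_cons hT hm (fun u hu => ?_)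
      fun u hu => hAT f u hu
    by_contra! h
    exact h.2 (hbad u hu h.1)
termination_by s.length

theorem snp_of_isMedianOrder {s : List V} (hT : IsTournament T)
    (hAT : ∀ u v, A u v → T u v) (hm : IsMedianOrder T (s ++ [f])) (hnd : (s ++ [f]).Nodup)
    (hall : ∀ v, v ∈ s ++ [f]) (hdom : ∀ z ∉ Nplus A f, z ∉ Npp A f → Nplus A f ⊆ Nplus T z) :
    SNP A f := by
  have hff : f ∉ Nplus A f := fun h => hT.1 f (hAT f f h)
  have hs := countP_Nplus_le_countP_Npp hT hAT hdom s hm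
  rw [SNP, hnd.ncard_eq_countP hall, hnd.ncard_eq_countP hall]
  simp only [List.countP_append, List.countP_singleton, hff, decide_false, Bool.false_eq_true,
    if_false]
  omega

end SecondNeighbourhood

theorem MissingEdge.symm {A : V → V → Prop} {u v : V} (h : MissingEdge A u v) :
    MissingEdge A v u :=
  ⟨h.1.symm, h.2.2, h.2.1⟩

theorem LosesAt.symm {A : V → V → Prop} {x₁ y₁ x₂ y₂ : V} (h : LosesAt A x₁ y₁ x₂ y₂) :
    LosesAt A y₁ x₁ y₂ x₂ :=
  ⟨h.2.2.2.1, h.2.2.2.2.1, h.2.2.2.2.2, h.1, h.2.1, h.2.2.1⟩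

theorem EdgeLoses.exists_losesAt {A : V → V → Prop} {e : Sym2 V} {x₂ y₂ : V}
    (h : EdgeLoses A e s(x₂, y₂)) : ∃ x₁ y₁, MissingEdge A x₁ y₁ ∧ LosesAt A x₁ y₁ x₂ y₂ := by
  obtain ⟨x₁, y₁, x₂', y₂', -, he, hm, -, hl⟩ := h
  rcases Sym2.eq_iff.1 he with ⟨rfl, rfl⟩ | ⟨rfl, rfl⟩
  · exact ⟨x₁, y₁, hm, hl⟩
  · exact ⟨y₁, x₁, hm.symm, hl.symm⟩

def centerCompletion (A : V → V → Prop) (C : Set V) (u v : V) : Prop :=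
  A u v ∨ (MissingEdge A u v ∧ u ∈ C)

theorem isTournament_centerCompletion {A : V → V → Prop} {C : Set V} (hA : NoDigons A)
    (hStar : ∀ u v, MissingEdge A u v → (u ∈ C ∧ v ∉ C) ∨ (v ∈ C ∧ u ∉ C)) :
    IsTournament (centerCompletion A C) := by
  refine ⟨fun v h => ?_, fun u v hne => ⟨?_, fun h => ?_⟩⟩
  · rcases h with h | ⟨h, -⟩
    exacts [hA v v ⟨h, h⟩, h.1 rfl]
  · rintro (huv | ⟨huv, hu⟩) (hvu | ⟨hvu, hv⟩)
    · exact hA u v ⟨huv, hvu⟩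
    · exact hvu.2.2 huv
    · exact huv.2.2 hvu
    · rcases hStar u v huv with ⟨-, hv'⟩ | ⟨-, hu'⟩
      exacts [hv' hv, hu' hu]
  · by_cases hm : MissingEdge A u v
    · rcases hStar u v hm with ⟨hu, -⟩ | ⟨hv, -⟩
      · exact Or.inr ⟨hm, hu⟩
      · exact absurd (Or.inr ⟨hm.symm, hv⟩) h
    · by_contra! h'
      exact hm ⟨hne, fun huv => h' (Or.inl huv), fun hvu => h (Or.inl hvu)⟩

section StarDeletion

variable {A : V → V → Prop} {C : Set V}

theorem exists_leaf_of_missingEdge (hA : NoDigons A)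
    (hStar : ∀ u v, MissingEdge A u v → (u ∈ C ∧ v ∉ C) ∨ (v ∈ C ∧ u ∉ C))
    (hLeaf : ∀ v ∉ C, ∀ x y, MissingEdge A v x → MissingEdge A v y → x = y)
    (hKing : ∀ x ∈ C, ∀ y ∈ C, y ≠ x → A x y ∨ ∃ w ∈ C, A x w ∧ A w y)
    (hIndeg : ∀ u v, MissingEdge A u v → ∃ e : Sym2 V, EdgeLoses A e s(u, v))
    {c l : V} (hcl : MissingEdge A c l) (hc : c ∈ C) :
    ∃ l₁ ∉ C, A l₁ l ∧ A c l₁ ∧ ∀ w, A l₁ w → ¬ A w c := by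
  obtain ⟨e, he⟩ := hIndeg c l hcl
  obtain ⟨x₁, y₁, hm₁, hx₁c, -, -, hy₁l, hny₁c, hcy₁⟩ := he.exists_losesAt
  have hy₁ne : y₁ ≠ c := by rintro rfl; exact hcl.2.1 hy₁l
  rcases hStar x₁ y₁ hm₁ with ⟨-, hy₁C⟩ | ⟨hy₁C, -⟩
  · -- `y₁` is a leaf whose only missing partner `x₁` differs from `c`, so `y₁` and `c` are adjacent
    have hx₁ne : x₁ ≠ c := by rintro rfl; exact hA x₁ x₁ ⟨hx₁c, hx₁c⟩
    have hcy₁' : A c y₁ := by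
      by_contra h
      exact hx₁ne (hLeaf y₁ hy₁C x₁ c hm₁.symm ⟨hy₁ne, hny₁c, h⟩)
    exact ⟨y₁, hy₁C, hy₁l, hcy₁', fun w hw hwc => hcy₁ ⟨hy₁ne.symm, hny₁c, w, hw, hwc⟩⟩
  · -- `y₁` and `c` are both centers, yet `c` is out of reach of the king `y₁`
    rcases hKing y₁ hy₁C c hc hy₁ne.symm with h | ⟨w, -, hw, hwc⟩
    exacts [absurd h hny₁c, absurd ⟨hy₁ne.symm, hny₁c, w, hw, hwc⟩ hcy₁]

theorem last_reaches_leaf_of_isMedianOrder (hA : NoDigons A)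
    (hStar : ∀ u v, MissingEdge A u v → (u ∈ C ∧ v ∉ C) ∨ (v ∈ C ∧ u ∉ C))
    (hLeaf : ∀ v ∉ C, ∀ x y, MissingEdge A v x → MissingEdge A v y → x = y)
    (hKing : ∀ x ∈ C, ∀ y ∈ C, y ≠ x → A x y ∨ ∃ w ∈ C, A x w ∧ A w y)
    (hIndeg : ∀ u v, MissingEdge A u v → ∃ e : Sym2 V, EdgeLoses A e s(u, v))
    {p : List V} {f : V} (hm : IsMedianOrder (centerCompletion A C) (p ++ [f]))
    (hall : ∀ v, v ∈ p ++ [f]) {c l : V} (hcl : MissingEdge A c l) (hc : c ∈ C)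
    (hfc : A f c) : A f l ∨ ∃ w, A f w ∧ A w l := by
  by_contra! hfl
  obtain ⟨l₁, hl₁C, hl₁l, -, hl₁c⟩ :=
    exists_leaf_of_missingEdge hA hStar hLeaf hKing hIndeg hcl hc
  have hfl₁ : MissingEdge A f l₁ :=
    ⟨fun h => hfl.1 (h ▸ hl₁l), fun h => hfl.2 l₁ h hl₁l, fun h => hl₁c f h hfc⟩
  have hfC : f ∈ C := by
    rcases hStar f l₁ hfl₁ with ⟨h, -⟩ | ⟨h, -⟩
    exacts [h, absurd h hl₁C]
  obtain ⟨l₀, hl₀C, -, hfl₀, hl₀f⟩ :=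
    exists_leaf_of_missingEdge hA hStar hLeaf hKing hIndeg hfl₁ hfC
  -- the leaf `l₀` cannot reach the center `f` in two steps, so `f` beats everything `l₀` beats
  have hsub : Nplus (centerCompletion A C) l₀ ⊆ Nplus (centerCompletion A C) f := by
    rintro u (hl₀u | ⟨-, hl₀C'⟩)
    · by_cases hfu : A f u
      · exact Or.inl hfu
      · have huf : u ≠ f := fun h => hA f l₀ ⟨hfl₀, h ▸ hl₀u⟩
        exact Or.inr ⟨⟨huf.symm, hfu, hl₀f u hl₀u⟩, hfC⟩
    · exact absurd hl₀C' hl₀C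
  have hl₀p : l₀ ∈ p := by
    have hl₀ne : l₀ ≠ f := by rintro rfl; exact hA l₀ l₀ ⟨hfl₀, hfl₀⟩
    simpa [hl₀ne] using hall l₀
  obtain ⟨p₁, p₂, rfl⟩ := List.append_of_mem hl₀p
  have hm' : IsMedianOrder (centerCompletion A C) (p₁ ++ l₀ :: (p₂ ++ [f])) := by simpa using hm
  exact hm'.of_append.not_Nplus_subset_of_last (isTournament_centerCompletion hA hStar)
    (Or.inl hfl₀) hsub

theorem Nplus_subset_of_not_reached (hA : NoDigons A)
    (hStar : ∀ u v, MissingEdge A u v → (u ∈ C ∧ v ∉ C) ∨ (v ∈ C ∧ u ∉ C))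
    (hLeaf : ∀ v ∉ C, ∀ x y, MissingEdge A v x → MissingEdge A v y → x = y)
    (hKing : ∀ x ∈ C, ∀ y ∈ C, y ≠ x → A x y ∨ ∃ w ∈ C, A x w ∧ A w y)
    (hIndeg : ∀ u v, MissingEdge A u v → ∃ e : Sym2 V, EdgeLoses A e s(u, v))
    {p : List V} {f : V} (hm : IsMedianOrder (centerCompletion A C) (p ++ [f]))
    (hall : ∀ v, v ∈ p ++ [f]) {z : V} (hfz : z ∉ Nplus A f) (hzN : z ∉ Npp A f) :
    Nplus A f ⊆ Nplus (centerCompletion A C) z := by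
  intro u hfu
  rw [mem_Nplus] at hfz hfu
  rcases eq_or_ne z f with rfl | hzf
  · exact Or.inl hfu
  have huz : ¬ A u z := fun h => hzN ⟨hzf, hfz, u, hfu, h⟩
  by_cases hzu : MissingEdge A z u
  · rcases hStar z u hzu with ⟨hzC, -⟩ | ⟨huC, -⟩
    · exact Or.inr ⟨hzu, hzC⟩
    · rcases last_reaches_leaf_of_isMedianOrder hA hStar hLeaf hKing hIndeg hm hall hzu.symm huC hfu
        with h | ⟨w, hfw, hwz⟩
      exacts [absurd h hfz, absurd ⟨hzf, hfz, w, hfw, hwz⟩ hzN]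
  · refine Or.inl (by_contra fun h => hzu ⟨?_, h, huz⟩)
    rintro rfl
    exact hfz hfu

end StarDeletion

theorem tournament_minus_disjoint_stars_kings_SNP_general [Fintype V] [Nonempty V]
    (A : V → V → Prop) (hA : NoDigons A)
    (C : Set V)
    -- the missing graph is a disjoint union of stars with centers `C`:
    (hStar : ∀ u v, MissingEdge A u v → (u ∈ C ∧ v ∉ C) ∨ (v ∈ C ∧ u ∉ C))
    (hLeaf : ∀ v ∉ C, ∀ x y, MissingEdge A v x → MissingEdge A v y → x = y)
    -- every center is a king of the tournament induced on the centers: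
    (hKing : ∀ x ∈ C, ∀ y ∈ C, y ≠ x → A x y ∨ ∃ w ∈ C, A x w ∧ A w y)
    -- δ⁻(Δ) > 0 : every missing edge is lost to by some missing edge:
    (hIndeg : ∀ u v, MissingEdge A u v → ∃ e : Sym2 V, EdgeLoses A e s(u, v)) :
    ∃ v : V, SNP A v := by
  obtain ⟨m, hmV, hm⟩ := exists_isMedianOrder (centerCompletion A C) Finset.univ.toList
  have hall : ∀ v, v ∈ m := fun v => hmV.mem_iff.2 (Finset.mem_toList.2 (Finset.mem_univ v))
  obtain ⟨p, f, rfl⟩ : ∃ p f, m = p ++ [f] :=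
    (List.eq_nil_or_concat' m).resolve_left (List.ne_nil_of_mem (hall (Classical.arbitrary V)))
  exact ⟨f, snp_of_isMedianOrder (isTournament_centerCompletion hA hStar) (fun _ _ => Or.inl) hm
    (hmV.nodup_iff.2 (Finset.nodup_toList _)) hall
    fun z hfz hzN => Nplus_subset_of_not_reached hA hStar hLeaf hKing hIndeg hm hall hfz hzN⟩

/-- a digraph obtained from a tournament by deleting the edges of
pairwise disjoint stars (with set of centers `C`), such that every center is a
king of the tournament induced on the centers, and every missing edge has
positive in-degree in the dependency digraph, has a vertex with the SNP. -/
theorem tournament_minus_disjoint_stars_kings_SNP [Fintype V] [Nonempty V]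
    (A : V → V → Prop) (hA : NoDigons A)
    (C : Set V)
    -- the missing graph is a disjoint union of stars with centers `C`:
    (hStar : ∀ u v, MissingEdge A u v → (u ∈ C ∧ v ∉ C) ∨ (v ∈ C ∧ u ∉ C))
    (hLeaf : ∀ v ∉ C, ∀ x y, MissingEdge A v x → MissingEdge A v y → x = y)
    (hCenter : ∀ x ∈ C, ∃ v, MissingEdge A x v)
    -- every center is a king of the tournament induced on the centers:
    (hKing : ∀ x ∈ C, ∀ y ∈ C, y ≠ x → A x y ∨ ∃ w ∈ C, A x w ∧ A w y)
    -- δ⁻(Δ) > 0 : every missing edge is lost to by some missing edge: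
    (hIndeg : ∀ u v, MissingEdge A u v → ∃ e : Sym2 V, EdgeLoses A e s(u, v)) :
    ∃ v : V, SNP A v :=
  tournament_minus_disjoint_stars_kings_SNP_general A hA C hStar hLeaf hKing hIndeg
end
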